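/- Let d̃ be the fixed point of F(d)(s_i,s_j) = (1−c)·|R^π_{s_i} − R^π_{s_j}| + c·W₁(d)(P^π_{s_i}, P^π_{s_j}) for a finite MDP with policy π and c ∈ [0,1). If γ ≤ c, then the value function V^π, defined as the unique fixed point of V^π(s) = R^π_s + γ·Σ_{s'} P^π(s'|s)·V^π(s'), is Lipschitz with respect to d̃ with constant 1/(1−c): |V^π(s_i) − V^π(s_j)| ≤ (1/(1−c))·d̃(s_i, s_j). -/

import Mathlib

open Finset

structure IsPseudometric {S : Type*} (d : S → S → ℝ) : Prop where
  nonneg : ∀ x y, 0 ≤ d x y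
  refl : ∀ x, d x x = 0
  symm : ∀ x y, d x y = d y x
  triangle : ∀ x y z, d x z ≤ d x y + d y z

def IsProb {S : Type*} [Fintype S] (p : S → ℝ) : Prop :=
  (∀ s, 0 ≤ p s) ∧ ∑ s, p s = 1

def IsCoupling {S : Type*} [Fintype S] (γ : S → S → ℝ) (p q : S → ℝ) : Prop :=
  (∀ x y, 0 ≤ γ x y) ∧ (∀ x, ∑ y, γ x y = p x) ∧ (∀ y, ∑ x, γ x y = q y)

noncomputable def W1 {S : Type*} [Fintype S] (d : S → S → ℝ) (p q : S → ℝ) : ℝ :=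
  sInf { r | ∃ γ : S → S → ℝ, IsCoupling γ p q ∧ r = ∑ x, ∑ y, d x y * γ x y }

noncomputable def bisimF {S : Type*} [Fintype S] (R : S → ℝ) (P : S → S → ℝ) (c : ℝ)
    (d : S → S → ℝ) : S → S → ℝ :=
  fun x y => (1 - c) * |R x - R y| + c * W1 d (P x) (P y)

noncomputable def bisimFA {S A : Type*} [Fintype S] [Fintype A] [Nonempty A]
    (R : S → A → ℝ) (P : S → A → S → ℝ) (c : ℝ) (d : S → S → ℝ) : S → S → ℝ :=
  fun x y => ⨆ a : A, ((1 - c) * |R x a - R y a| + c * W1 d (P x a) (P y a))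

/-!
Let `K = 1/(1-c)` and let `M` be the largest value of `|V a - V b| - K·d̃(a, b)` over pairs of
states, attained at `(x, y)`. Then `V` is `K`-Lipschitz for `d̃` up to the additive error `M`,
so by coupling the transition laws `|E_{P x} V - E_{P y} V| ≤ K·W₁(d̃)(P x, P y) + M`.
Inserting this into the Bellman equation at `(x, y)` and comparing with the fixed-point
equation `K·d̃(x, y) = |R x - R y| + c·K·W₁(d̃)(P x, P y)` gives `M ≤ γ·M` because `γ ≤ c`,
hence `M ≤ 0`.
-/

section Coupling

variable {S : Type*} [Fintype S]

theorem IsProb.isCoupling_mul {p q : S → ℝ} (hp : IsProb p) (hq : IsProb q) :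
    IsCoupling (fun a b => p a * q b) p q := by
  refine ⟨fun a b => mul_nonneg (hp.1 a) (hq.1 b), fun a => ?_, fun b => ?_⟩
  · rw [← mul_sum, hq.2, mul_one]
  · rw [← sum_mul, hp.2, one_mul]

theorem IsCoupling.sum_sum_eq_one {g : S → S → ℝ} {p q : S → ℝ} (hg : IsCoupling g p q)
    (hp : IsProb p) : ∑ a, ∑ b, g a b = 1 := by
  simp only [hg.2.1, hp.2]

theorem IsCoupling.sum_sum_sub_mul {g : S → S → ℝ} {p q : S → ℝ} (hg : IsCoupling g p q)
    (f : S → ℝ) : ∑ a, ∑ b, (f a - f b) * g a b = ∑ a, p a * f a - ∑ b, q b * f b := by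
  have hleft : ∑ a, ∑ b, f a * g a b = ∑ a, p a * f a :=
    sum_congr rfl fun a _ => by rw [← mul_sum, hg.2.1, mul_comm]
  have hright : ∑ a, ∑ b, f b * g a b = ∑ b, q b * f b := by
    rw [sum_comm]
    exact sum_congr rfl fun b _ => by rw [← mul_sum, hg.2.2, mul_comm]
  simp only [sub_mul, sum_sub_distrib, hleft, hright]

theorem le_W1 {d : S → S → ℝ} {p q : S → ℝ} {r : ℝ} (hp : IsProb p) (hq : IsProb q)
    (h : ∀ g, IsCoupling g p q → r ≤ ∑ a, ∑ b, d a b * g a b) : r ≤ W1 d p q :=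
  le_csInf ⟨_, _, hp.isCoupling_mul hq, rfl⟩ fun _ ⟨g, hg, hr⟩ => hr ▸ h g hg

theorem W1_nonneg {d : S → S → ℝ} (hd : ∀ a b, 0 ≤ d a b) {p q : S → ℝ} (hp : IsProb p)
    (hq : IsProb q) : 0 ≤ W1 d p q :=
  le_W1 hp hq fun _ hg => sum_nonneg fun a _ => sum_nonneg fun b _ =>
    mul_nonneg (hd a b) (hg.1 a b)

/-- The easy half of Kantorovich duality, for functions that are `K`-Lipschitz up to an
additive error `M`. -/
theorem abs_sum_mul_sub_sum_mul_le_W1 {d : S → S → ℝ} {p q : S → ℝ} (hp : IsProb p)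
    (hq : IsProb q) {f : S → ℝ} {K M : ℝ} (hK : 0 < K)
    (hf : ∀ a b, |f a - f b| ≤ K * d a b + M) :
    |∑ a, p a * f a - ∑ a, q a * f a| ≤ K * W1 d p q + M := by
  suffices h : (|∑ a, p a * f a - ∑ a, q a * f a| - M) / K ≤ W1 d p q by
    rw [div_le_iff₀ hK] at h
    linarith
  refine le_W1 hp hq fun g hg => (div_le_iff₀' hK).2 ?_
  have hbound : |∑ a, p a * f a - ∑ a, q a * f a| ≤ ∑ a, ∑ b, (K * d a b + M) * g a b :=
    calc |∑ a, p a * f a - ∑ a, q a * f a|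
        = |∑ a, ∑ b, (f a - f b) * g a b| := by rw [hg.sum_sum_sub_mul]
      _ ≤ ∑ a, ∑ b, |(f a - f b) * g a b| :=
          (abs_sum_le_sum_abs _ _).trans (sum_le_sum fun a _ => abs_sum_le_sum_abs _ _)
      _ ≤ ∑ a, ∑ b, (K * d a b + M) * g a b := by
          gcongr with a _ b _
          rw [abs_mul, abs_of_nonneg (hg.1 a b)]
          exact mul_le_mul_of_nonneg_right (hf a b) (hg.1 a b)
  have hexpand : ∑ a, ∑ b, (K * d a b + M) * g a b = K * ∑ a, ∑ b, d a b * g a b + M := by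
    simp_rw [add_mul, mul_assoc, sum_add_distrib, ← mul_sum, hg.sum_sum_eq_one hp, mul_one]
  linarith

end Coupling

/-- if `γ ≤ c`, the value function `V^π` is Lipschitz with constant
`1/(1-c)` with respect to the π-bisimulation metric `d̃`. -/
theorem stmt_5 {S : Type*} [Fintype S]
    (R : S → ℝ) (P : S → S → ℝ) (hP : ∀ s, IsProb (P s))
    (γ c : ℝ) (hγ0 : 0 ≤ γ) (hγc : γ ≤ c) (hc1 : c < 1)
    (dt : S → S → ℝ) (hdt : IsPseudometric dt) (hfix : bisimF R P c dt = dt)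
    (V : S → ℝ) (hV : ∀ s, V s = R s + γ * ∑ s', P s s' * V s') :
    ∀ s_i s_j, |V s_i - V s_j| ≤ (1 / (1 - c)) * dt s_i s_j := by
  intro s_i s_j
  have : Nonempty S := ⟨s_i⟩
  set K := 1 / (1 - c)
  have hK : 0 < K := one_div_pos.2 (by linarith)
  have hKc : K * (1 - c) = 1 := one_div_mul_cancel (by linarith)
  obtain ⟨⟨x, y⟩, hmax⟩ := Finite.exists_max fun p : S × S => |V p.1 - V p.2| - K * dt p.1 p.2
  set M := |V x - V y| - K * dt x y
  suffices hM : M ≤ 0 by linarith [hmax (s_i, s_j)]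
  set W := W1 dt (P x) (P y)
  have hW : 0 ≤ W := W1_nonneg hdt.nonneg (hP x) (hP y)
  have hE := abs_sum_mul_sub_sum_mul_le_W1 (hP x) (hP y) hK
    (fun a b => by linarith [hmax (a, b)] : ∀ a b, |V a - V b| ≤ K * dt a b + M)
  have hVxy : |V x - V y| ≤ |R x - R y| + γ * (K * W + M) :=
    calc |V x - V y|
        = |(R x - R y) + γ * (∑ a, P x a * V a - ∑ a, P y a * V a)| := by
          rw [hV x, hV y]; congr 1; ring
      _ ≤ |R x - R y| + γ * |∑ a, P x a * V a - ∑ a, P y a * V a| :=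
          (abs_add_le _ _).trans_eq (by rw [abs_mul, abs_of_nonneg hγ0])
      _ ≤ |R x - R y| + γ * (K * W + M) := by gcongr
  have hdxy : K * dt x y = |R x - R y| + c * (K * W) := by
    rw [← hfix, bisimF, mul_add, ← mul_assoc, hKc]; ring
  -- `M ≤ γ M + (γ - c) K W ≤ γ M`
  nlinarith [mul_le_mul_of_nonneg_right hγc (mul_nonneg hK.le hW)]
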